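/- arXiv:1807.08317 — 2 statements merged into one kernel-verified Lean document; each statement's English description precedes it below -/
import Mathlib

section
/- Let g ∈ C²(ℝ^d; ℝ) be even with ∇g(0) = 0 and with g and all of its partial derivatives up to order 2 bounded and continuous, and let ℏ, m, V₀ > 0. Define the phase function Φ(k,t) := −(V₀/ℏ)² [ g(0)t − ∫₀ᵗ g(−(2ℏs/m)k) ds ]. Let F : ℝ^d × ℝ^d → ℂ be C² with F and all of its partial derivatives up to order 2 bounded. Define R̂(k,t) := e^{Φ(k,t)} F(k, −(2ℏt/m)k). Then, as t → ∞, − Σ_{j=1}^d ∂²R̂/∂k_j²(k,t)|_{k=0} = −(1/3)(2V₀/m)² (Δg)(0) F(0,0) t³ + O(t²). In particular, if (Δg)(0) < 0 and F(0,0) > 0 the leading coefficient is positive and the growth is superballistic of order t³. -/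
/-!
At `k = 0` the phase `Φ(·, t)` vanishes together with its gradient (because `∇g(0) = 0`), so the
second derivative of `R̂(·, t) = e^Φ F(k, -(2ℏt/m)k)` at `0` in a direction `e` is
`∂²_e Φ(0, t) F(0, 0) + D²F(0, 0)((e, -(2ℏt/m)e), (e, -(2ℏt/m)e))`. Differentiating twice under the
integral, `∂²_e Φ(0, t) = (V₀/ℏ)² ∫₀ᵗ (2ℏs/m)² ds ∂²_e g(0) = (2V₀/m)² (t³/3) ∂²_e g(0)`, which
produces the `t³` term; the remaining term is a quadratic polynomial in `t`.
-/

open intervalIntegral Filter Asymptotics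

/-- The Laplacian `(Δg)(x) = Σ_i ∂²g/∂x_i²(x)` of a real-valued function on `ℝ^d`,
written via iterated directional derivatives along the coordinate directions. -/
noncomputable def coordLaplacian (d : ℕ) (g : (Fin d → ℝ) → ℝ) (x : Fin d → ℝ) : ℝ :=
  ∑ i : Fin d,
    fderiv ℝ (fun y => fderiv ℝ g y (Pi.single i 1)) x (Pi.single i 1)

section ParametricIntegral

variable {E G : Type*} [NormedAddCommGroup E] [NormedSpace ℝ E] [FiniteDimensional ℝ E]
  [NormedAddCommGroup G] [NormedSpace ℝ G]

theorem hasFDerivAt_intervalIntegral_smul_comp_smul {φ : E → G} (hφ : ContDiff ℝ 1 φ)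
    {w c : ℝ → ℝ} (hw : Continuous w) (hc : Continuous c) (a b : ℝ) (x : E) :
    HasFDerivAt (fun y => ∫ s in a..b, w s • φ (c s • y))
      (∫ s in a..b, (w s * c s) • fderiv ℝ φ (c s • x)) x := by
  have hφc : Continuous φ := hφ.continuous
  have hφ' : Continuous (fderiv ℝ φ) := hφ.continuous_fderiv one_ne_zero
  have hint : Continuous fun p : ℝ × E => w p.1 • φ (c p.1 • p.2) := by fun_prop
  have hder : Continuous fun p : ℝ × E => (w p.1 * c p.1) • fderiv ℝ φ (c p.1 • p.2) := by
    fun_prop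
  -- dominate the derivative by its maximum on the compact set `[a, b] × closedBall x 1`
  obtain ⟨M, hM⟩ := (isCompact_uIcc.prod (isCompact_closedBall x 1)).exists_bound_of_continuousOn
    hder.continuousOn
  refine intervalIntegral.hasFDerivAt_integral_of_dominated_of_fderiv_le (bound := fun _ => M)
    (Metric.closedBall_mem_nhds x one_pos) (.of_forall fun y => ?_) ?_ ?_
    (MeasureTheory.ae_of_all _ fun s hs y hy => hM (s, y) ⟨Set.uIoc_subset_uIcc hs, hy⟩)
    intervalIntegrable_const
    (MeasureTheory.ae_of_all _ fun s _ y _ => ?_)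
  · exact (hint.comp (Continuous.prodMk_left y)).aestronglyMeasurable
  · exact (hint.comp (Continuous.prodMk_left x)).intervalIntegrable _ _
  · exact (hder.comp (Continuous.prodMk_left x)).aestronglyMeasurable
  · have := (((hφ.differentiable one_ne_zero) (c s • y)).hasFDerivAt.comp y
      ((hasFDerivAt_id y).const_smul (c s))).const_smul (w s)
    refine this.congr_fderiv ?_
    ext v
    simp [smul_smul]

theorem hasFDerivAt_intervalIntegral_comp_smul {g : E → G} (hg : ContDiff ℝ 1 g) {c : ℝ → ℝ}
    (hc : Continuous c) (a b : ℝ) (x : E) :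
    HasFDerivAt (fun y => ∫ s in a..b, g (c s • y))
      (∫ s in a..b, c s • fderiv ℝ g (c s • x)) x := by
  simpa using hasFDerivAt_intervalIntegral_smul_comp_smul hg continuous_const hc a b x (w := 1)

theorem hasFDerivAt_intervalIntegral_smul_fderiv_comp_smul_zero [CompleteSpace G] {g : E → G}
    (hg : ContDiff ℝ 2 g) {c : ℝ → ℝ} (hc : Continuous c) (a b : ℝ) :
    HasFDerivAt (fun y => ∫ s in a..b, c s • fderiv ℝ g (c s • y))
      ((∫ s in a..b, c s ^ 2) • fderiv ℝ (fderiv ℝ g) 0) 0 := by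
  simpa [sq, intervalIntegral.integral_smul_const] using
    hasFDerivAt_intervalIntegral_smul_comp_smul (hg.fderiv_right le_rfl) hc hc a b 0

end ParametricIntegral

section ExpSmul

variable {E F : Type*} [NormedAddCommGroup E] [NormedSpace ℝ E] [NormedAddCommGroup F]
  [NormedSpace ℝ F]

theorem fderiv_fderiv_exp_smul_apply_of_critical {u : E → ℝ} {v : E → F} {u' : E → E →L[ℝ] ℝ}
    {v' : E → E →L[ℝ] F} {U : E →L[ℝ] ℝ} {V : E →L[ℝ] F} {x e : E}
    (hu : ∀ k, HasFDerivAt u (u' k) k) (hv : ∀ k, HasFDerivAt v (v' k) k)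
    (hU : HasFDerivAt (fun k => u' k e) U x) (hV : HasFDerivAt (fun k => v' k e) V x)
    (hux : u x = 0) (hu'x : u' x e = 0) :
    fderiv ℝ (fun k => fderiv ℝ (fun k' => Real.exp (u k') • v k') k e) x e = U e • v x + V e := by
  have hfirst : (fun k => fderiv ℝ (fun k' => Real.exp (u k') • v k') k e)
      = fun k => Real.exp (u k) • v' k e + (Real.exp (u k) * u' k e) • v k := by
    funext k
    have hk : HasFDerivAt (fun k' => Real.exp (u k') • v k') _ k := (hu k).exp.smul (hv k)
    rw [hk.fderiv]
    simp
  have hx : HasFDerivAt (fun k => Real.exp (u k) • v' k e + (Real.exp (u k) * u' k e) • v k) _ x :=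
    ((hu x).exp.smul hV).add (((hu x).exp.mul hU).smul (hv x))
  rw [hfirst, hx.fderiv]
  simp [hux, hu'x, add_comm]

end ExpSmul

section ExplicitSolution

variable {E G : Type*} [NormedAddCommGroup E] [NormedSpace ℝ E] [FiniteDimensional ℝ E]
  [NormedAddCommGroup G] [NormedSpace ℝ G]

theorem fderiv_fderiv_exp_phase_smul_apply {g : E → ℝ} (hg : ContDiff ℝ 2 g)
    (hg0 : fderiv ℝ g 0 = 0) {f : E × E → G} (hf : ContDiff ℝ 2 f) {c : ℝ → ℝ}
    (hc : Continuous c) (a t b : ℝ) (e : E) :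
    fderiv ℝ (fun k => fderiv ℝ (fun k' =>
        Real.exp (-a * (g 0 * t - ∫ s in (0:ℝ)..t, g (c s • k'))) • f (k', b • k')) k e) 0 e
      = (a * (∫ s in (0:ℝ)..t, c s ^ 2) * fderiv ℝ (fun y => fderiv ℝ g y e) 0 e) • f 0
        + fderiv ℝ (fderiv ℝ f) 0 (e, b • e) (e, b • e) := by
  set ψ' : E → E →L[ℝ] ℝ := fun k => ∫ s in (0:ℝ)..t, c s • fderiv ℝ g (c s • k)
  set ℓ : E →L[ℝ] E × E := (ContinuousLinearMap.id ℝ E).prod (b • ContinuousLinearMap.id ℝ E)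
  have hphase (k : E) : HasFDerivAt (fun k' => -a * (g 0 * t - ∫ s in (0:ℝ)..t, g (c s • k')))
      (a • ψ' k) k := by
    have hψ := hasFDerivAt_intervalIntegral_comp_smul (hg.of_le one_le_two) hc 0 t k
    simpa [mul_sub] using (hψ.const_mul a).sub_const (a * (g 0 * t))
  have hprofile (k : E) : HasFDerivAt (fun k' => f (ℓ k')) ((fderiv ℝ f (ℓ k)).comp ℓ) k :=
    ((hf.differentiable two_ne_zero) (ℓ k)).hasFDerivAt.comp k ℓ.hasFDerivAt
  have hD2f : HasFDerivAt (fderiv ℝ f) (fderiv ℝ (fderiv ℝ f) (ℓ 0)) (ℓ 0) :=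
    ((hf.fderiv_right le_rfl).differentiable one_ne_zero (ℓ 0)).hasFDerivAt
  have hcritical := fderiv_fderiv_exp_smul_apply_of_critical (e := e) hphase hprofile
    ((ContinuousLinearMap.apply ℝ ℝ e).hasFDerivAt.comp 0
      ((hasFDerivAt_intervalIntegral_smul_fderiv_comp_smul_zero hg hc 0 t).const_smul a))
    ((ContinuousLinearMap.apply ℝ G (ℓ e)).hasFDerivAt.comp 0 (hD2f.comp 0 ℓ.hasFDerivAt))
    (by simp [mul_comm]) (by simp [ψ', hg0])
  have hdir : fderiv ℝ (fderiv ℝ g) 0 e e = fderiv ℝ (fun y => fderiv ℝ g y e) 0 e := by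
    rw [fderiv_clm_apply ((hg.fderiv_right le_rfl).differentiable one_ne_zero 0)
      (differentiableAt_const e)]
    simp
  simpa [ℓ, hdir, mul_assoc, Prod.mk_zero_zero] using hcritical

theorem fderiv_fderiv_explicitSolution_apply {g : E → ℝ} (hg : ContDiff ℝ 2 g)
    (hg0 : fderiv ℝ g 0 = 0) {F : E × E → ℂ} (hF : ContDiff ℝ 2 F) {ℏ m V₀ : ℝ} (hℏ : ℏ ≠ 0)
    {Rhat : E → ℝ → ℂ}
    (hRhat : ∀ k t, Rhat k t = Real.exp (-(V₀ / ℏ) ^ 2 *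
      (g 0 * t - ∫ s in (0:ℝ)..t, g (-(2 * ℏ * s / m) • k))) * F (k, -(2 * ℏ * t / m) • k))
    (t : ℝ) (e : E) :
    fderiv ℝ (fun k => fderiv ℝ (fun k' => Rhat k' t) k e) 0 e
      = ((2 * V₀ / m) ^ 2 * (t ^ 3 / 3) * fderiv ℝ (fun y => fderiv ℝ g y e) 0 e) • F 0
        + fderiv ℝ (fderiv ℝ F) 0 (e, (-(2 * ℏ / m) * t) • e) (e, (-(2 * ℏ / m) * t) • e) := by
  have hR : (fun k' => Rhat k' t) = fun k' => Real.exp (-(V₀ / ℏ) ^ 2 *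
      (g 0 * t - ∫ s in (0:ℝ)..t, g (-(2 * ℏ * s / m) • k'))) •
        F (k', (-(2 * ℏ / m) * t) • k') := by
    funext k'
    rw [hRhat, Complex.real_smul, show -(2 * ℏ * t / m) = -(2 * ℏ / m) * t by ring]
  have hflight : ∫ s in (0:ℝ)..t, (-(2 * ℏ * s / m)) ^ 2 = (2 * ℏ / m) ^ 2 * (t ^ 3 / 3) := by
    simp_rw [neg_sq, div_pow, mul_pow, intervalIntegral.integral_div,
      intervalIntegral.integral_const_mul, integral_pow]
    ring
  rw [hR, fderiv_fderiv_exp_phase_smul_apply hg hg0 hF (by fun_prop), hflight]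
  congr 2
  field_simp

end ExplicitSolution

theorem isBigO_apply_apply_prodMk_smul {E F : Type*} [NormedAddCommGroup E] [NormedSpace ℝ E]
    [NormedAddCommGroup F] [NormedSpace ℝ F] (B : E × E →L[ℝ] E × E →L[ℝ] F) (x : E) (β : ℝ) :
    (fun t : ℝ => B (x, (β * t) • x) (x, (β * t) • x)) =O[atTop] fun t => t ^ 2 := by
  refine IsBigO.of_bound (‖B‖ * ((1 + |β|) * ‖x‖) ^ 2) ?_
  filter_upwards [eventually_ge_atTop 1] with t ht
  have hpair : ‖(x, (β * t) • x)‖ ≤ (1 + |β|) * ‖x‖ * t := by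
    rw [Prod.norm_mk, norm_smul, Real.norm_eq_abs, abs_mul, abs_of_pos (by linarith : 0 < t)]
    apply max_le <;> nlinarith [norm_nonneg x, mul_nonneg (abs_nonneg β) (norm_nonneg x)]
  calc ‖B (x, (β * t) • x) (x, (β * t) • x)‖
      ≤ ‖B‖ * ‖(x, (β * t) • x)‖ * ‖(x, (β * t) • x)‖ := B.le_opNorm₂ _ _
    _ ≤ ‖B‖ * ((1 + |β|) * ‖x‖ * t) * ((1 + |β|) * ‖x‖ * t) := by gcongr
    _ = ‖B‖ * ((1 + |β|) * ‖x‖) ^ 2 * ‖t ^ 2‖ := by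
      rw [norm_pow, Real.norm_eq_abs, abs_of_pos (by linarith : 0 < t)]
      ring

theorem superballistic_from_explicit_solution_general
    (d : ℕ) (ℏ m V₀ : ℝ) (hℏ : 0 < ℏ)
    (g : (Fin d → ℝ) → ℝ) (hg : ContDiff ℝ 2 g)
    (hggrad : fderiv ℝ g 0 = 0)
    (F : (Fin d → ℝ) × (Fin d → ℝ) → ℂ) (hF : ContDiff ℝ 2 F)
    (Φ : (Fin d → ℝ) → ℝ → ℝ)
    (hΦ : ∀ (k : Fin d → ℝ) (t : ℝ),
      Φ k t = -((V₀ / ℏ) ^ 2) *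
        (g 0 * t - ∫ s in (0:ℝ)..t, g (-(2 * ℏ * s / m) • k)))
    (Rhat : (Fin d → ℝ) → ℝ → ℂ)
    (hRhat : ∀ (k : Fin d → ℝ) (t : ℝ),
      Rhat k t = (Real.exp (Φ k t) : ℝ) * F (k, -(2 * ℏ * t / m) • k)) :
    (fun t : ℝ =>
        (-(∑ j : Fin d,
            fderiv ℝ (fun k => fderiv ℝ (fun k' => Rhat k' t) k (Pi.single j 1)) 0
              (Pi.single j 1)))
          - ((-(1 / 3) * (2 * V₀ / m) ^ 2 * coordLaplacian d g 0 : ℝ) : ℂ)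
              * F (0, 0) * (t : ℂ) ^ 3)
      =O[atTop] fun t : ℝ => t ^ 2 := by
  have hsecond (t : ℝ) (j : Fin d) :=
    fderiv_fderiv_explicitSolution_apply (m := m) (V₀ := V₀) (Rhat := Rhat) hg hggrad hF hℏ.ne'
      (fun k t => by rw [hRhat, hΦ]) t (Pi.single j 1)
  have hremainder : ∀ t : ℝ, -(∑ j : Fin d,
        fderiv ℝ (fun k => fderiv ℝ (fun k' => Rhat k' t) k (Pi.single j 1)) 0 (Pi.single j 1))
      - ((-(1 / 3) * (2 * V₀ / m) ^ 2 * coordLaplacian d g 0 : ℝ) : ℂ) * F (0, 0) * (t : ℂ) ^ 3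
      = -∑ j : Fin d, fderiv ℝ (fderiv ℝ F) 0 (Pi.single j 1, (-(2 * ℏ / m) * t) • Pi.single j 1)
              (Pi.single j 1, (-(2 * ℏ / m) * t) • Pi.single j 1) := by
    intro t
    simp only [hsecond, Finset.sum_add_distrib, ← Finset.sum_smul, ← Finset.mul_sum]
    rw [← coordLaplacian, Complex.real_smul, Prod.mk_zero_zero]
    push_cast
    ring
  simp_rw [hremainder]
  exact (IsBigO.fun_sum fun j _ => isBigO_apply_apply_prodMk_smul _ _ _).neg_left

/-- Superballistic `t³` growth from the explicit solution
`R̂(k,t) = e^{Φ(k,t)} F(k, −(2ℏt/m)k)` with phase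
`Φ(k,t) = −(V₀/ℏ)² [g(0)t − ∫₀ᵗ g(−(2ℏs/m)k) ds]`: as `t → ∞`,
`−Σ_j ∂²R̂/∂k_j²(0,t) = −(1/3)(2V₀/m)² (Δg)(0) F(0,0) t³ + O(t²)`. -/
theorem superballistic_from_explicit_solution
    (d : ℕ) (hd : 1 ≤ d) (ℏ m V₀ : ℝ) (hℏ : 0 < ℏ) (hm : 0 < m) (hV₀ : 0 < V₀)
    (g : (Fin d → ℝ) → ℝ) (hg : ContDiff ℝ 2 g)
    (hgeven : ∀ x, g (-x) = g x) (hggrad : fderiv ℝ g 0 = 0)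
    (hgbdd : ∀ n : ℕ, n ≤ 2 → ∃ C : ℝ, ∀ x, ‖iteratedFDeriv ℝ n g x‖ ≤ C)
    (F : (Fin d → ℝ) × (Fin d → ℝ) → ℂ) (hF : ContDiff ℝ 2 F)
    (hFbdd : ∀ n : ℕ, n ≤ 2 → ∃ C : ℝ, ∀ p, ‖iteratedFDeriv ℝ n F p‖ ≤ C)
    (Φ : (Fin d → ℝ) → ℝ → ℝ)
    (hΦ : ∀ (k : Fin d → ℝ) (t : ℝ),
      Φ k t = -((V₀ / ℏ) ^ 2) *
        (g 0 * t - ∫ s in (0:ℝ)..t, g (-(2 * ℏ * s / m) • k)))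
    (Rhat : (Fin d → ℝ) → ℝ → ℂ)
    (hRhat : ∀ (k : Fin d → ℝ) (t : ℝ),
      Rhat k t = (Real.exp (Φ k t) : ℝ) * F (k, -(2 * ℏ * t / m) • k)) :
    (fun t : ℝ =>
        (-(∑ j : Fin d,
            fderiv ℝ (fun k => fderiv ℝ (fun k' => Rhat k' t) k (Pi.single j 1)) 0
              (Pi.single j 1)))
          - ((-(1 / 3) * (2 * V₀ / m) ^ 2 * coordLaplacian d g 0 : ℝ) : ℂ)
              * F (0, 0) * (t : ℂ) ^ 3)
      =O[atTop] fun t : ℝ => t ^ 2 :=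
  superballistic_from_explicit_solution_general d ℏ m V₀ hℏ g hg hggrad F hF Φ hΦ Rhat hRhat
end

section
/- Let d ≥ 1, c₁ > 0. Let Γ : ℤ^d → [0,∞) be even with Γ(0) = 0, Γ(ê_m) > 0 and Γ(2ê_m) > 0 for each m = 1,…,d. Let a : ℤ^d → ℝ be even, and let p_m^+, p_m^−, q_m ∈ ℝ for m = 1,…,d. For s > 0 set h(Y) := s + Γ(Y), u(Y) := a(Y)/h(Y), v_m^+ := ( c₁[u(2ê_m) − u(0)] + i p_m^+ ) / h(ê_m), v_m^− := ( c₁[u(0) − u(−2ê_m)] + i p_m^− ) / h(ê_m), and w_m := (1/s)( 2c₁[v_m^+ − v_m^−] + i c₁[u(ê_m) + u(−ê_m)] − 2 i c₁ u(0) + q_m ). Then there is a constant C (independent of s) such that for all s ∈ (0,1], | Re( −Σ_{m=1}^d w_m ) − (2c₁)² (a(0)/s²) Σ_{m=1}^d 1/(s + Γ(ê_m)) | ≤ C/s. In particular, Re(−Σ_m w_m) = (2c₁)² (a(0)/s²) Σ_m h(ê_m)^{−1} + O(1/s) as s → 0⁺. -/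
open Complex

/-- The algebraic elimination in the lattice case. With
`h(Y) = s + Γ(Y)`, `u(Y) = a(Y)/h(Y)`,
`v_m^+ = (c₁[u(2ê_m) − u(0)] + i p_m^+)/h(ê_m)`, `v_m^− = (c₁[u(0) − u(−2ê_m)] + i p_m^−)/h(ê_m)`, and
`w_m = (1/s)(2c₁[v_m^+ − v_m^−] + i c₁[u(ê_m) + u(−ê_m)] − 2 i c₁ u(0) + q_m)`,
one has `Re(−Σ_m w_m) = (2c₁)² (a(0)/s²) Σ_m (s + Γ(ê_m))⁻¹ + O(1/s)` as `s → 0⁺`,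
uniformly for `s ∈ (0,1]`. -/
theorem lattice_algebraic_elimination
    (d : ℕ) (hd : 1 ≤ d) (c₁ : ℝ) (hc₁ : 0 < c₁)
    (Γ : (Fin d → ℤ) → ℝ) (hΓnonneg : ∀ Y, 0 ≤ Γ Y)
    (hΓeven : ∀ Y, Γ (-Y) = Γ Y) (hΓ0 : Γ 0 = 0)
    (hΓe : ∀ m : Fin d, 0 < Γ (Pi.single m 1))
    (hΓ2e : ∀ m : Fin d, 0 < Γ (Pi.single m 2))
    (a : (Fin d → ℤ) → ℝ) (haeven : ∀ Y, a (-Y) = a Y)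
    (pPlus pMinus q : Fin d → ℝ)
    (h : ℝ → (Fin d → ℤ) → ℝ) (u : ℝ → (Fin d → ℤ) → ℝ)
    (vPlus vMinus w : ℝ → Fin d → ℂ)
    (hh : ∀ s Y, h s Y = s + Γ Y)
    (hu : ∀ s Y, u s Y = a Y / h s Y)
    (hvPlus : ∀ (s : ℝ) (m : Fin d), vPlus s m =
      ((c₁ : ℂ) * ((u s (Pi.single m 2) : ℝ) - (u s 0 : ℝ))
        + Complex.I * (pPlus m : ℂ)) / (h s (Pi.single m 1) : ℂ))
    (hvMinus : ∀ (s : ℝ) (m : Fin d), vMinus s m =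
      ((c₁ : ℂ) * ((u s 0 : ℝ) - (u s (-Pi.single m 2) : ℝ))
        + Complex.I * (pMinus m : ℂ)) / (h s (Pi.single m 1) : ℂ))
    (hw : ∀ (s : ℝ) (m : Fin d), w s m =
      (1 / (s : ℂ)) * (2 * (c₁ : ℂ) * (vPlus s m - vMinus s m)
        + Complex.I * (c₁ : ℂ)
            * ((u s (Pi.single m 1) : ℝ) + (u s (-Pi.single m 1) : ℝ))
        - 2 * Complex.I * (c₁ : ℂ) * (u s 0 : ℝ) + (q m : ℂ))) :
    ∃ C : ℝ, ∀ s ∈ Set.Ioc (0 : ℝ) 1,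
      |(-(∑ m : Fin d, w s m)).re
          - (2 * c₁) ^ 2 * (a 0 / s ^ 2) * ∑ m : Fin d, (s + Γ (Pi.single m 1))⁻¹|
        ≤ C / s := by
  classical
  refine ⟨∑ m : Fin d, (4*c₁^2 * |a (Pi.single m 2)| / (Γ (Pi.single m 2) * Γ (Pi.single m 1)) + |q m|), ?_⟩
  rintro s ⟨hs, hs1⟩
  have hs0 : (s : ℝ) ≠ 0 := ne_of_gt hs
  -- positivity of denominators
  have hpos : ∀ Y, 0 < Γ Y → 0 < s + Γ Y := fun Y hY => by positivity
  -- real part of each w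
  have hre : ∀ m : Fin d, (w s m).re =
      (4*c₁^2 * (u s (Pi.single m 2) - u s 0) / (s + Γ (Pi.single m 1)) + q m) / s := by
    intro m
    have hueven : u s (-Pi.single m 2) = u s (Pi.single m 2) := by
      rw [hu, hu, hh, hh, hΓeven, haeven]
    rw [hw, hvPlus, hvMinus, hueven, hh]
    have hne : ((s + Γ (Pi.single m 1) : ℝ) : ℂ) ≠ 0 := by
      exact_mod_cast ne_of_gt (hpos _ (hΓe m))
    have hsne : (s : ℂ) ≠ 0 := by exact_mod_cast hs0
    have : (1 / (s : ℂ)) * (2 * (c₁ : ℂ) *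
        ((((c₁ : ℂ) * ((u s (Pi.single m 2) : ℝ) - (u s 0 : ℝ))
          + Complex.I * (pPlus m : ℂ)) / ((s + Γ (Pi.single m 1) : ℝ) : ℂ))
        - (((c₁ : ℂ) * ((u s 0 : ℝ) - (u s (Pi.single m 2) : ℝ))
          + Complex.I * (pMinus m : ℂ)) / ((s + Γ (Pi.single m 1) : ℝ) : ℂ)))
        + Complex.I * (c₁ : ℂ)
            * ((u s (Pi.single m 1) : ℝ) + (u s (-Pi.single m 1) : ℝ))
        - 2 * Complex.I * (c₁ : ℂ) * (u s 0 : ℝ) + (q m : ℂ)) =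
      (((4*c₁^2 * (u s (Pi.single m 2) - u s 0) / (s + Γ (Pi.single m 1)) + q m) / s : ℝ) : ℂ)
      + Complex.I * (((2*c₁*(pPlus m - pMinus m) / (s + Γ (Pi.single m 1))
          + c₁ * (u s (Pi.single m 1) + u s (-Pi.single m 1)) - 2*c₁*(u s 0)) / s : ℝ) : ℂ) := by
      push_cast
      field_simp
      ring
    rw [this]
    simp only [Complex.add_re, Complex.mul_re, Complex.I_re, Complex.I_im,
      Complex.ofReal_re, Complex.ofReal_im]
    ring
  -- rewrite the difference as a sum
  have hsum : (-(∑ m : Fin d, w s m)).re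
      - (2 * c₁) ^ 2 * (a 0 / s ^ 2) * ∑ m : Fin d, (s + Γ (Pi.single m 1))⁻¹
      = ∑ m : Fin d, (-(w s m).re
          - (2 * c₁) ^ 2 * (a 0 / s ^ 2) * (s + Γ (Pi.single m 1))⁻¹) := by
    rw [Finset.sum_sub_distrib, ← Finset.mul_sum]
    simp [Complex.re_sum]
  rw [hsum]
  refine (Finset.abs_sum_le_sum_abs _ _).trans ?_
  rw [Finset.sum_div]
  refine Finset.sum_le_sum fun m _ => ?_
  -- per-term identity
  have he1 : (0:ℝ) < s + Γ (Pi.single m 1) := hpos _ (hΓe m)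
  have he2 : (0:ℝ) < s + Γ (Pi.single m 2) := hpos _ (hΓ2e m)
  have hterm : -(w s m).re - (2 * c₁) ^ 2 * (a 0 / s ^ 2) * (s + Γ (Pi.single m 1))⁻¹
      = -(4*c₁^2 * a (Pi.single m 2) / ((s + Γ (Pi.single m 2)) * (s + Γ (Pi.single m 1)) * s))
        - q m / s := by
    rw [hre, hu, hu, hh, hh, hΓ0, add_zero]
    field_simp
    ring
  rw [hterm]
  have hD : (0:ℝ) < (s + Γ (Pi.single m 2)) * (s + Γ (Pi.single m 1)) * s := by positivity
  have hb1 : |(-(4*c₁^2 * a (Pi.single m 2) / ((s + Γ (Pi.single m 2)) * (s + Γ (Pi.single m 1)) * s)))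
      - q m / s| ≤ 4*c₁^2 * |a (Pi.single m 2)| / ((s + Γ (Pi.single m 2)) * (s + Γ (Pi.single m 1)) * s)
        + |q m| / s := by
    refine (abs_sub _ _).trans ?_
    rw [abs_neg, abs_div, _root_.abs_of_pos hD, abs_mul,
      _root_.abs_of_nonneg (show (0:ℝ) ≤ 4*c₁^2 by positivity), abs_div, _root_.abs_of_pos hs]
  refine hb1.trans ?_
  rw [add_div, div_div]
  refine add_le_add (div_le_div_of_nonneg_left (by positivity) (mul_pos (mul_pos (hΓ2e m) (hΓe m)) hs) ?_) le_rfl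
  exact mul_le_mul (mul_le_mul (by linarith [hΓnonneg (Pi.single m 2)]) (by linarith [hΓnonneg (Pi.single m 1)]) (le_of_lt (hΓe m)) (le_of_lt he2)) le_rfl (le_of_lt hs) (by positivity)
end
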